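/- arXiv:1110.6851 — 3 statements merged into one kernel-verified Lean document; each statement's English description precedes it below -/
import Mathlib

section
/- With notation as in the combinatorial description (S a sublattice of 2^{Fin n} with ∅, Fin n ∈ S; partitions Fin n = E⁰_S ⊔ E^>_S ⊔ E^*_S with E⁰_S = S^c satisfying (RV1) and (RV2)), P_i := ⋃{S ∈ S : i ∈ E^≥_S} where E^≥_S = E⁰_S ⊔ E^>_S, and β^R_i(y) = y_i - R∑_{j ∉ P_i, P_j ≠ P_i} y_j for R > 0: one has β^R(U⁺) ⊆ V⁺, where U⁺ = ⋃_{S∈S} F_{>0}^S·0^{S^c} and V⁺ = ⋃_{S∈S} 0^{E⁰_S}·F_{>0}^{E^>_S}·F^{E^*_S}. -/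
open Classical

/-- `Z_i = ⋃ {S ∈ 𝒮 : i ∉ S}`. -/
def Zset (n : ℕ) (𝒮 : Set (Set (Fin n))) (i : Fin n) : Set (Fin n) :=
  ⋃₀ {S ∈ 𝒮 | i ∉ S}

/-- `α^ε_i(z) = z_i + ε ∑_{j ∉ Z_i} z_j`. -/
noncomputable def alphaMap (F : Subfield ℝ) (n : ℕ) (𝒮 : Set (Set (Fin n))) (ε : F)
    (z : Fin n → F) : Fin n → F :=
  fun i => z i + ε * ∑ j ∈ Finset.univ.filter (fun j => j ∉ Zset n 𝒮 i), z j

/-- `P_i = ⋃ {S ∈ 𝒮 : i ∈ E^≥_S}` where `E^≥_S = Sᶜ ∪ E^>_S`. -/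
def Pset (n : ℕ) (𝒮 : Set (Set (Fin n))) (Egt : Set (Fin n) → Set (Fin n)) (i : Fin n) :
    Set (Fin n) :=
  ⋃₀ {S ∈ 𝒮 | i ∈ Sᶜ ∪ Egt S}

/-- `β^R_i(y) = y_i - R ∑_{j ∉ P_i, P_j ≠ P_i} y_j`. -/
noncomputable def betaMap (F : Subfield ℝ) (n : ℕ) (𝒮 : Set (Set (Fin n)))
    (Egt : Set (Fin n) → Set (Fin n)) (R : F) (y : Fin n → F) : Fin n → F :=
  fun i => y i - R * ∑ j ∈ Finset.univ.filter
    (fun j => j ∉ Pset n 𝒮 Egt i ∧ Pset n 𝒮 Egt j ≠ Pset n 𝒮 Egt i), y j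

/-- `U⁺ = ⋃_{S ∈ 𝒮} F_{>0}^S · 0^{Sᶜ}`. -/
def Uset (F : Subfield ℝ) (n : ℕ) (𝒮 : Set (Set (Fin n))) : Set (Fin n → F) :=
  {x | ∃ S ∈ 𝒮, (∀ i ∈ S, 0 < x i) ∧ ∀ i ∉ S, x i = 0}

/-- `V⁺ = ⋃_{S ∈ 𝒮} 0^{E⁰_S} · F_{>0}^{E^>_S} · F^{E^*_S}` (zero off `S`, strictly
positive on `E^>_S`, arbitrary on `E^*_S`). -/
def Vset (F : Subfield ℝ) (n : ℕ) (𝒮 : Set (Set (Fin n)))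
    (Egt : Set (Fin n) → Set (Fin n)) : Set (Fin n → F) :=
  {x | ∃ S ∈ 𝒮, (∀ i ∉ S, x i = 0) ∧ ∀ i ∈ Egt S, 0 < x i}

/-! For `y ∈ U⁺` supported on `S ∈ 𝒮`, every `i ∈ E^≥_S` has `S ⊆ P_i`, so each `y_j` in the
correction sum of `β^R_i` vanishes and `β^R_i(y) = y_i`. Hence `β^R(y)` agrees with `y` on
`Sᶜ ⊔ E^>_S`: it is zero on `Sᶜ` and positive on `E^>_S ⊆ S`, i.e. it lies in `V⁺` via the same `S`. -/

lemma subset_Pset {n : ℕ} {𝒮 : Set (Set (Fin n))} {Egt : Set (Fin n) → Set (Fin n)}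
    {S : Set (Fin n)} (hS : S ∈ 𝒮) {i : Fin n} (hi : i ∈ Sᶜ ∪ Egt S) :
    S ⊆ Pset n 𝒮 Egt i :=
  Set.subset_sUnion_of_mem ⟨hS, hi⟩

lemma betaMap_apply_of_eq_zero_off {F : Subfield ℝ} {n : ℕ} {𝒮 : Set (Set (Fin n))}
    {Egt : Set (Fin n) → Set (Fin n)} (R : F) {y : Fin n → F} {S : Set (Fin n)} (hS : S ∈ 𝒮)
    (hzero : ∀ j ∉ S, y j = 0) {i : Fin n} (hi : i ∈ Sᶜ ∪ Egt S) :
    betaMap F n 𝒮 Egt R y i = y i := by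
  have hsum : ∑ j ∈ Finset.univ.filter
      (fun j => j ∉ Pset n 𝒮 Egt i ∧ Pset n 𝒮 Egt j ≠ Pset n 𝒮 Egt i), y j = 0 :=
    Finset.sum_eq_zero fun j hj =>
      hzero j fun hjS => (Finset.mem_filter.mp hj).2.1 (subset_Pset hS hi hjS)
  simp only [betaMap, hsum, mul_zero, sub_zero]

theorem stmt10_general (F : Subfield ℝ) (n : ℕ) (𝒮 : Set (Set (Fin n)))
    (Egt Estar : Set (Fin n) → Set (Fin n))
    (hpart : ∀ S ∈ 𝒮, Egt S ∩ Estar S = ∅ ∧ Egt S ∪ Estar S = S)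
    (R : F) :
    ∀ y ∈ Uset F n 𝒮, betaMap F n 𝒮 Egt R y ∈ Vset F n 𝒮 Egt := by
  rintro y ⟨S, hS, hpos, hzero⟩
  refine ⟨S, hS, fun i hi => ?_, fun i hi => ?_⟩
  · rw [betaMap_apply_of_eq_zero_off R hS hzero (Or.inl hi)]
    exact hzero i hi
  · rw [betaMap_apply_of_eq_zero_off R hS hzero (Or.inr hi)]
    exact hpos i ((hpart S hS).2 ▸ Or.inl hi)

/-- With the combinatorial description (sublattice `𝒮` containing `∅` and `univ`,
partitions `Fin n = Sᶜ ⊔ E^>_S ⊔ E^*_S` for `S ∈ 𝒮` satisfying (RV1) and (RV2)),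
one has `β^R(U⁺) ⊆ V⁺` for every `R > 0`. -/
theorem stmt10 (F : Subfield ℝ) (n : ℕ) (𝒮 : Set (Set (Fin n)))
    (hempty : ∅ ∈ 𝒮) (huniv : Set.univ ∈ 𝒮)
    (hcup : ∀ S₁ ∈ 𝒮, ∀ S₂ ∈ 𝒮, S₁ ∪ S₂ ∈ 𝒮)
    (hcap : ∀ S₁ ∈ 𝒮, ∀ S₂ ∈ 𝒮, S₁ ∩ S₂ ∈ 𝒮)
    (Egt Estar : Set (Fin n) → Set (Fin n))
    (hpart : ∀ S ∈ 𝒮, Egt S ∩ Estar S = ∅ ∧ Egt S ∪ Estar S = S)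
    (hRV1 : ∀ S₁ ∈ 𝒮, ∀ S₂ ∈ 𝒮,
      (S₁ ∪ S₂)ᶜ ∪ Egt (S₁ ∪ S₂) = (S₁ᶜ ∪ Egt S₁) ∩ (S₂ᶜ ∪ Egt S₂))
    (hRV2 : ∀ S₁ ∈ 𝒮, ∀ S₂ ∈ 𝒮, ¬ S₂ ⊆ S₁ → (Egt S₂ \ S₁).Nonempty)
    (R : F) (hR : 0 < R) :
    ∀ y ∈ Uset F n 𝒮, betaMap F n 𝒮 Egt R y ∈ Vset F n 𝒮 Egt :=
  stmt10_general F n 𝒮 Egt Estar hpart R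
end

section
/- With the setup as above, U⁺ = ⋃_{ε > 0} ⋂_{0 < ε' < ε} α^{ε'}(F_{≥0}ⁿ): every element of U⁺ lies in α^{ε'}(F_{≥0}ⁿ) for all sufficiently small ε' > 0, and conversely. -/
/-!
Write `j ≼ i` for `j ∉ Z_i`; this is a preorder, and `i ∉ S ∈ 𝒮` forces `S ⊆ Z_i`.

If `x = α^ε z` with `z ≥ 0` and `ε > 0`, then `x ≥ 0`, and `x_k = 0` exactly when `z` vanishes
on `{j ≼ k}`. Hence the support of `x` is the intersection of the `Z_k` over the zeros `k` of `x`,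
which lies in `𝒮` because `𝒮` is a lattice containing `∅` and `Fin n`.

Conversely, let `x` be positive exactly on `S ∈ 𝒮`. Since `S ⊆ Z_i` for `i ∉ S`, the map `α^ε`
sends vectors supported on `S` to vectors supported on `S`, so it suffices to solve
`(1 + ε B) z = x` with `B` the matrix of the sum in `α` restricted to the rows in `S`. For small
`ε` this matrix is invertible and its solution `z(ε)` tends to `x`, so `z(ε) ≥ 0`.
-/

open Classical

open Filter Topology Matrix

section Zset

variable {n : ℕ} {𝒮 : Set (Set (Fin n))}

lemma notMem_Zset_self (i : Fin n) : i ∉ Zset n 𝒮 i := by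
  rintro ⟨S, ⟨-, hiS⟩, hiS'⟩
  exact hiS hiS'

lemma subset_Zset {S : Set (Fin n)} (hS : S ∈ 𝒮) {i : Fin n} (hi : i ∉ S) : S ⊆ Zset n 𝒮 i :=
  Set.subset_sUnion_of_mem ⟨hS, hi⟩

lemma notMem_Zset_trans {i j k : Fin n} (hji : j ∉ Zset n 𝒮 i) (hik : i ∉ Zset n 𝒮 k) :
    j ∉ Zset n 𝒮 k := by
  rintro ⟨T, ⟨hT, hkT⟩, hjT⟩
  exact hji ⟨T, ⟨hT, fun hiT => hik ⟨T, ⟨hT, hkT⟩, hiT⟩⟩, hjT⟩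

lemma Zset_mem (hempty : ∅ ∈ 𝒮) (hcup : ∀ S₁ ∈ 𝒮, ∀ S₂ ∈ 𝒮, S₁ ∪ S₂ ∈ 𝒮) (i : Fin n) :
    Zset n 𝒮 i ∈ 𝒮 :=
  SupClosed.sSup_mem (fun _ h₁ _ h₂ => hcup _ h₁ _ h₂) (Set.toFinite _) hempty (Set.sep_subset _ _)

end Zset

section alphaMap

variable {F : Subfield ℝ} {n : ℕ} {𝒮 : Set (Set (Fin n))} {ε : F} {z : Fin n → F}

lemma alphaMap_nonneg (hε : 0 ≤ ε) (hz : ∀ i, 0 ≤ z i) (i : Fin n) :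
    0 ≤ alphaMap F n 𝒮 ε z i :=
  add_nonneg (hz i) (mul_nonneg hε (Finset.sum_nonneg fun j _ => hz j))

lemma alphaMap_eq_zero_iff (hε : 0 < ε) (hz : ∀ i, 0 ≤ z i) (k : Fin n) :
    alphaMap F n 𝒮 ε z k = 0 ↔ ∀ j ∉ Zset n 𝒮 k, z j = 0 := by
  have hsum := Finset.sum_eq_zero_iff_of_nonneg (s := Finset.univ.filter (· ∉ Zset n 𝒮 k))
    fun j _ => hz j
  simp only [Finset.mem_filter, Finset.mem_univ, true_and] at hsum
  rw [alphaMap, add_eq_zero_iff_of_nonneg (hz k)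
    (mul_nonneg hε.le (Finset.sum_nonneg fun j _ => hz j)), mul_eq_zero, or_iff_right hε.ne', hsum]
  exact ⟨fun h => h.2, fun h => ⟨h k (notMem_Zset_self k), h⟩⟩

lemma alphaMap_mem_Uset (hempty : ∅ ∈ 𝒮) (huniv : Set.univ ∈ 𝒮)
    (hcup : ∀ S₁ ∈ 𝒮, ∀ S₂ ∈ 𝒮, S₁ ∪ S₂ ∈ 𝒮) (hcap : ∀ S₁ ∈ 𝒮, ∀ S₂ ∈ 𝒮, S₁ ∩ S₂ ∈ 𝒮)
    (hε : 0 < ε) (hz : ∀ i, 0 ≤ z i) : alphaMap F n 𝒮 ε z ∈ Uset F n 𝒮 := by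
  set x := alphaMap F n 𝒮 ε z
  refine ⟨⋂ k ∈ {k | x k = 0}, Zset n 𝒮 k,
    InfClosed.biInf_mem (fun _ h₁ _ h₂ => hcap _ h₁ _ h₂) (Set.toFinite _) huniv
      fun k _ => Zset_mem hempty hcup k, fun i hi => ?_, fun i hi => ?_⟩
  · refine (alphaMap_nonneg hε.le hz i).lt_of_ne' fun hxi => ?_
    exact notMem_Zset_self i (Set.mem_iInter₂.1 hi i hxi)
  · obtain ⟨k, hxk, hik⟩ : ∃ k, x k = 0 ∧ i ∉ Zset n 𝒮 k := by simpa using hi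
    rw [alphaMap_eq_zero_iff hε hz] at hxk ⊢
    exact fun j hji => hxk j (notMem_Zset_trans hji hik)

end alphaMap

section MatrixPerturbation

variable {𝕜 ι : Type*} [NormedField 𝕜] [Fintype ι] [DecidableEq ι]

lemma Matrix.eventually_isUnit_det_one_add_smul (B : Matrix ι ι 𝕜) :
    ∀ᶠ t in 𝓝 (0 : 𝕜), IsUnit (1 + t • B).det := by
  have hcont : Continuous fun t : 𝕜 => (1 + t • B).det := by fun_prop
  filter_upwards [hcont.continuousAt.eventually_ne (by simp : (1 + (0 : 𝕜) • B).det ≠ 0)]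
    with t ht
  exact isUnit_iff_ne_zero.2 ht

lemma Matrix.tendsto_inv_one_add_smul_mulVec (B : Matrix ι ι 𝕜) (x : ι → 𝕜) :
    Tendsto (fun t : 𝕜 => (1 + t • B)⁻¹ *ᵥ x) (𝓝 0) (𝓝 x) := by
  have hinv : ContinuousAt (fun t : 𝕜 => (1 + t • B)⁻¹) 0 := by
    refine ContinuousAt.comp (g := Inv.inv) (continuousAt_matrix_inv _ ?_) (by fun_prop)
    simpa [Ring.inverse_eq_inv'] using continuousAt_inv₀ (one_ne_zero (α := 𝕜))
  have hmulVec : Continuous fun A : Matrix ι ι 𝕜 => A *ᵥ x :=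
    continuous_id.matrix_mulVec continuous_const
  simpa [Function.comp_def] using hmulVec.continuousAt.tendsto.comp hinv.tendsto

end MatrixPerturbation

lemma Subfield.exists_pos_forall_of_eventually_nhds_zero {F : Subfield ℝ} {p : F → Prop}
    (h : ∀ᶠ t in 𝓝 (0 : F), p t) : ∃ ε : F, 0 < ε ∧ ∀ t, 0 < t → t < ε → p t := by
  obtain ⟨δ, hδ, hp⟩ := Metric.eventually_nhds_iff.1 h
  obtain ⟨q, hq, hqδ⟩ := exists_rat_btwn hδ
  refine ⟨q, by exact_mod_cast hq, fun t ht htq => hp ?_⟩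
  have ht' : (0 : ℝ) < t := ht
  have htq' : (t : ℝ) < q := by exact_mod_cast htq
  rw [Subtype.dist_eq, Real.dist_eq]
  simp only [ZeroMemClass.coe_zero, sub_zero, abs_of_pos ht']
  linarith

/-- The matrix of the sum in `α`, with the rows outside `S` cleared, so that a solution of
`(1 + ε • B) z = x` vanishes outside `S` whenever `x` does. -/
noncomputable def alphaMatrix (F : Subfield ℝ) (n : ℕ) (𝒮 : Set (Set (Fin n))) (S : Set (Fin n)) :
    Matrix (Fin n) (Fin n) F :=
  Matrix.of fun i j => if i ∈ S ∧ j ∉ Zset n 𝒮 i then 1 else 0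

section alphaMatrix

variable {F : Subfield ℝ} {n : ℕ} {𝒮 : Set (Set (Fin n))}

lemma alphaMatrix_mulVec (S : Set (Fin n)) (z : Fin n → F) (i : Fin n) :
    (alphaMatrix F n 𝒮 S *ᵥ z) i =
      if i ∈ S then ∑ j ∈ Finset.univ.filter (fun j => j ∉ Zset n 𝒮 i), z j else 0 := by
  by_cases hi : i ∈ S <;> simp [alphaMatrix, mulVec, dotProduct, hi, Finset.sum_filter]

lemma alphaMap_eq_of_one_add_smul_mulVec_eq {S : Set (Fin n)} (hS : S ∈ 𝒮) {ε : F}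
    {x z : Fin n → F} (hx : ∀ i ∉ S, x i = 0) (h : (1 + ε • alphaMatrix F n 𝒮 S) *ᵥ z = x) :
    (∀ i ∉ S, z i = 0) ∧ alphaMap F n 𝒮 ε z = x := by
  have hrow : ∀ i, z i + ε * (alphaMatrix F n 𝒮 S *ᵥ z) i = x i := fun i => by
    simpa [add_mulVec, smul_mulVec] using congrFun h i
  have hzS : ∀ i ∉ S, z i = 0 := fun i hi => by
    simpa [alphaMatrix_mulVec, hi, hx i hi] using hrow i
  refine ⟨hzS, funext fun i => ?_⟩
  by_cases hi : i ∈ S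
  · simpa [alphaMap, alphaMatrix_mulVec, hi] using hrow i
  · have hsum : ∑ j ∈ Finset.univ.filter (fun j => j ∉ Zset n 𝒮 i), z j = 0 :=
      Finset.sum_eq_zero fun j hj =>
        hzS j fun hjS => (Finset.mem_filter.1 hj).2 (subset_Zset hS hi hjS)
    simp [alphaMap, hsum, hzS i hi, hx i hi]

lemma eventually_mem_alphaMap_image {x : Fin n → F} (hx : x ∈ Uset F n 𝒮) :
    ∀ᶠ ε in 𝓝 (0 : F), x ∈ alphaMap F n 𝒮 ε '' {z | ∀ i, 0 ≤ z i} := by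
  obtain ⟨S, hS, hpos, hzero⟩ := hx
  set B := alphaMatrix F n 𝒮 S
  have hposS : ∀ᶠ ε in 𝓝 (0 : F), ∀ i ∈ S, 0 < ((1 + ε • B)⁻¹ *ᵥ x) i :=
    eventually_all.2 fun i => eventually_imp_distrib_left.2 fun hi =>
      ((continuous_apply i).tendsto x |>.comp
        (tendsto_inv_one_add_smul_mulVec B x)).eventually_const_lt (hpos i hi)
  filter_upwards [eventually_isUnit_det_one_add_smul B, hposS] with ε hdet hposε
  have hsol : (1 + ε • B) *ᵥ ((1 + ε • B)⁻¹ *ᵥ x) = x := by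
    rw [mulVec_mulVec, mul_nonsing_inv _ hdet, one_mulVec]
  obtain ⟨hzS, hα⟩ := alphaMap_eq_of_one_add_smul_mulVec_eq hS hzero hsol
  refine ⟨_, fun i => ?_, hα⟩
  by_cases hi : i ∈ S
  · exact (hposε i hi).le
  · exact (hzS i hi).ge

end alphaMatrix

/-- `U⁺ = ⋃_{ε > 0} ⋂_{0 < ε' < ε} α^{ε'}(F_{≥0}ⁿ)`: every element of `U⁺` lies in
`α^{ε'}(F_{≥0}ⁿ)` for all sufficiently small `ε' > 0`, and conversely. -/
theorem stmt12 (F : Subfield ℝ) (n : ℕ) (𝒮 : Set (Set (Fin n)))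
    (hempty : ∅ ∈ 𝒮) (huniv : Set.univ ∈ 𝒮)
    (hcup : ∀ S₁ ∈ 𝒮, ∀ S₂ ∈ 𝒮, S₁ ∪ S₂ ∈ 𝒮)
    (hcap : ∀ S₁ ∈ 𝒮, ∀ S₂ ∈ 𝒮, S₁ ∩ S₂ ∈ 𝒮) :
    Uset F n 𝒮 =
      ⋃ (ε : F) (_ : 0 < ε), ⋂ (ε' : F) (_ : 0 < ε' ∧ ε' < ε),
        alphaMap F n 𝒮 ε' '' {z : Fin n → F | ∀ i, 0 ≤ z i} := by
  ext x
  simp only [Set.mem_iUnion, Set.mem_iInter, exists_prop]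
  constructor
  · intro hx
    obtain ⟨ε, hε, h⟩ :=
      Subfield.exists_pos_forall_of_eventually_nhds_zero (eventually_mem_alphaMap_image hx)
    exact ⟨ε, hε, fun ε' hε' => h ε' hε'.1 hε'.2⟩
  · rintro ⟨ε, hε, h⟩
    obtain ⟨z, hz, rfl⟩ := h (ε / 2) ⟨half_pos hε, half_lt_self hε⟩
    exact alphaMap_mem_Uset hempty huniv hcup hcap (half_pos hε) hz
end

section
/- With the setup as above, for any R₁, ε₁ > 0 and any R' > R₁, there exist R₂ > R' and 0 < ε₂ < ε₁ such that β^{R₁}(α^{ε₁}(F_{≥0}ⁿ)) ⊆ β^{R₂}(α^{ε₂}(F_{≥0}ⁿ)). -/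
open Classical

/-!
Write `A` for the incidence matrix of the preorder `j ≼ i :↔ j ∉ Z_i` and `B` for that of the
relation defining `β`, so that `α^ε = 1 + ε A` and `β^R = 1 - R B`. Both lie in the semiring of
nonnegative matrices supported on `≼`, and `B` is nilpotent because `P` strictly grows along it.
Hence `1 - R₂ B` has the nonnegative inverse `∑ (R₂ B)^m`, and `(1 - R₂ B)(1 + V) = 1 - R₁ B` for
`V = (R₂ - R₁)(1 - R₂ B)⁻¹ B` in that semiring. With `U = (1 + V)(1 + ε₁ A)` it remains to solve
`(1 + ε₂ A) w = U z` with `w ≥ 0` for every `z ≥ 0`. Every matrix of the semiring is bounded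
entrywise by a multiple of `A`, so for small `ε₂` the perturbation `X = ε₂ A` satisfies
`2 X² ≤ X` and `2 X U ≤ ε₁ A ≤ U`; the first makes `1 + X` invertible and both together force
`w ≥ U z - 2 X U z ≥ 0`.
-/

namespace Matrix

variable {ι K : Type*} [Fintype ι] [Field K] [LinearOrder K] [IsStrictOrderedRing K]

lemma mulVec_nonneg_of_nonneg {M : Matrix ι ι K} (hM : ∀ i j, 0 ≤ M i j) {v : ι → K}
    (hv : 0 ≤ v) : 0 ≤ M *ᵥ v :=
  fun i => Finset.sum_nonneg fun j _ => mul_nonneg (hM i j) (hv j)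

lemma mulVec_mono_of_nonneg {M : Matrix ι ι K} (hM : ∀ i j, 0 ≤ M i j) {u v : ι → K}
    (huv : u ≤ v) : M *ᵥ u ≤ M *ᵥ v := by
  have := mulVec_nonneg_of_nonneg hM (sub_nonneg.2 huv)
  rwa [mulVec_sub, sub_nonneg] at this

lemma abs_mulVec_le {M : Matrix ι ι K} (hM : ∀ i j, 0 ≤ M i j) (v : ι → K) (i : ι) :
    |(M *ᵥ v) i| ≤ (M *ᵥ fun j => |v j|) i := by
  refine (Finset.abs_sum_le_sum_abs _ _).trans_eq (Finset.sum_congr rfl fun j _ => ?_)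
  rw [abs_mul, abs_of_nonneg (hM i j)]

section SmallPerturbation

variable {X : Matrix ι ι K}

/-- The bound `|w| ≤ u + X|w|` improves, through `2 X² ≤ X`, to `X|w| ≤ 2 X u`. -/
lemma sub_two_smul_mulVec_le (hX : ∀ i j, 0 ≤ X i j) (hXX : ∀ i j, 2 * (X * X) i j ≤ X i j)
    {u w : ι → K} (hu : 0 ≤ u) (hw : w + X *ᵥ w = u) :
    u - (2 : K) • X *ᵥ u ≤ w := by
  set a : ι → K := fun j => |w j|
  have ha : 0 ≤ a := fun j => abs_nonneg (w j)
  have hwa : a ≤ u + X *ᵥ a := fun i => by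
    have hi := congrFun hw i
    simp only [Pi.add_apply] at hi
    calc |w i| = |u i - (X *ᵥ w) i| := by rw [← hi, add_sub_cancel_right]
      _ ≤ |u i| + |(X *ᵥ w) i| := abs_sub _ _
      _ ≤ u i + (X *ᵥ a) i := add_le_add (abs_of_nonneg (hu i)).le (abs_mulVec_le hX w i)
  have hXa : X *ᵥ a ≤ X *ᵥ u + (X * X) *ᵥ a := by
    rw [← mulVec_mulVec, ← mulVec_add]
    exact mulVec_mono_of_nonneg hX hwa
  have hXXa : (2 : K) • (X * X) *ᵥ a ≤ X *ᵥ a := by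
    have := mulVec_nonneg_of_nonneg (M := X - (2 : K) • (X * X))
      (fun i j => by simpa using sub_nonneg.2 (hXX i j)) ha
    rwa [sub_mulVec, smul_mulVec, sub_nonneg] at this
  intro i
  have hi := congrFun hw i
  have h1 := hXa i
  have h2 := hXXa i
  have h3 : (X *ᵥ w) i ≤ (X *ᵥ a) i := (le_abs_self _).trans (abs_mulVec_le hX w i)
  simp only [Pi.add_apply, Pi.smul_apply, Pi.sub_apply, smul_eq_mul] at hi h1 h2 ⊢
  linarith

lemma isUnit_one_add [DecidableEq ι] (hX : ∀ i j, 0 ≤ X i j)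
    (hXX : ∀ i j, 2 * (X * X) i j ≤ X i j) : IsUnit (1 + X) := by
  refine mulVec_injective_iff_isUnit.1 fun v w hvw => ?_
  have key : ∀ d : ι → K, d + X *ᵥ d = 0 → 0 ≤ d := fun d hd => by
    simpa using sub_two_smul_mulVec_le hX hXX le_rfl hd
  have hd : (1 + X) *ᵥ (v - w) = 0 := by rw [mulVec_sub, hvw, sub_self]
  rw [add_mulVec, one_mulVec] at hd
  have h1 := key _ hd
  have h2 := key (w - v) (by rw [← neg_sub, mulVec_neg, ← neg_add, hd, neg_zero])
  exact le_antisymm (sub_nonneg.1 h2) (sub_nonneg.1 h1)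

lemma exists_nonneg_add_mulVec_eq [DecidableEq ι] (hX : ∀ i j, 0 ≤ X i j)
    (hXX : ∀ i j, 2 * (X * X) i j ≤ X i j) {U : Matrix ι ι K} (hU : ∀ i j, 0 ≤ U i j)
    (hXU : ∀ i j, 2 * (X * U) i j ≤ U i j) {z : ι → K} (hz : 0 ≤ z) :
    ∃ w, 0 ≤ w ∧ (1 + X) *ᵥ w = U *ᵥ z := by
  obtain ⟨w, hw⟩ := mulVec_surjective_iff_isUnit.2 (isUnit_one_add hX hXX) (U *ᵥ z)
  refine ⟨w, le_trans ?_ (sub_two_smul_mulVec_le hX hXX (mulVec_nonneg_of_nonneg hU hz)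
    (by rwa [add_mulVec, one_mulVec] at hw)), hw⟩
  rw [mulVec_mulVec, ← smul_mulVec, ← sub_mulVec]
  exact mulVec_nonneg_of_nonneg (fun i j => by simpa using sub_nonneg.2 (hXU i j)) hz

end SmallPerturbation

lemma isNilpotent_of_apply_ne_zero {R : Type*} [Semiring R] [DecidableEq ι] {M : Matrix ι ι R}
    (f : ι → ℕ) (hM : ∀ i j, M i j ≠ 0 → f i < f j) : IsNilpotent M := by
  have hpow : ∀ m i j, (M ^ m) i j ≠ 0 → f i + m ≤ f j := by
    intro m
    induction m with
    | zero =>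
      intro i j h
      obtain rfl : i = j := of_not_not fun hij => h (by rw [pow_zero, one_apply_ne hij])
      omega
    | succ m ih =>
      intro i j h
      rw [pow_succ, mul_apply] at h
      obtain ⟨k, -, hk⟩ := Finset.exists_ne_zero_of_sum_ne_zero h
      have := ih i k (left_ne_zero_of_mul hk)
      have := hM k j (right_ne_zero_of_mul hk)
      omega
  refine ⟨Finset.univ.sup f + 1, ext fun i j => of_not_not fun h => ?_⟩
  have := hpow _ i j h
  have := Finset.le_sup (f := f) (Finset.mem_univ j)
  omega

noncomputable def incidence (K : Type*) [MulZeroOneClass K] (r : ι → ι → Prop) : Matrix ι ι K :=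
  of fun i j => if r j i then 1 else 0

def nonnegIncidence (K : Type*) [Field K] [LinearOrder K] [IsStrictOrderedRing K]
    (r : ι → ι → Prop) [IsPreorder ι r] [DecidableEq ι] : Subsemiring (Matrix ι ι K) where
  carrier := {M | ∀ i j, 0 ≤ M i j ∧ (¬ r j i → M i j = 0)}
  mul_mem' {M N} hM hN i j := by
    simp only [mul_apply]
    refine ⟨Finset.sum_nonneg fun k _ => mul_nonneg (hM i k).1 (hN k j).1, fun hji => ?_⟩
    refine Finset.sum_eq_zero fun k _ => ?_
    by_cases hki : r k i
    · rw [(hN k j).2 fun hjk => hji (trans_of r hjk hki), mul_zero]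
    · rw [(hM i k).2 hki, zero_mul]
  one_mem' i j := by
    by_cases h : i = j
    · subst h; simp [refl_of r i]
    · simp [one_apply_ne h]
  add_mem' hM hN i j :=
    ⟨add_nonneg (hM i j).1 (hN i j).1, fun h => by simp [(hM i j).2 h, (hN i j).2 h]⟩
  zero_mem' i j := by simp

section NonnegIncidence

variable [DecidableEq ι] {r : ι → ι → Prop} [IsPreorder ι r]

lemma incidence_mem_nonnegIncidence {s : ι → ι → Prop} (hsr : ∀ i j, s i j → r i j) :
    incidence K s ∈ nonnegIncidence K r := fun i j => by
  by_cases h : s j i <;> simp [incidence, h, hsr j i]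

lemma smul_mem_nonnegIncidence {c : K} (hc : 0 ≤ c) {M : Matrix ι ι K}
    (hM : M ∈ nonnegIncidence K r) : c • M ∈ nonnegIncidence K r := fun i j =>
  ⟨mul_nonneg hc (hM i j).1, fun h => by simp [(hM i j).2 h]⟩

lemma exists_le_mul_incidence {M : Matrix ι ι K} (hM : M ∈ nonnegIncidence K r) :
    ∃ c, 0 ≤ c ∧ ∀ i j, M i j ≤ c * incidence K r i j := by
  refine ⟨∑ i, ∑ j, M i j, Finset.sum_nonneg fun i _ => Finset.sum_nonneg fun j _ => (hM i j).1,
    fun i j => ?_⟩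
  by_cases h : r j i
  · have hrow := Finset.single_le_sum (fun j _ => (hM i j).1) (Finset.mem_univ j)
    have hcol := Finset.single_le_sum (f := fun i => ∑ j, M i j)
      (fun i _ => Finset.sum_nonneg fun j _ => (hM i j).1) (Finset.mem_univ i)
    simpa [incidence, h] using hrow.trans hcol
  · simp [incidence, h, (hM i j).2 h]

lemma exists_one_sub_smul_mul_one_add_eq {B : Matrix ι ι K} (hB : B ∈ nonnegIncidence K r)
    (hBnil : IsNilpotent B) {R₁ R₂ : K} (hR₂ : 0 ≤ R₂) (hR : R₁ ≤ R₂) :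
    ∃ V ∈ nonnegIncidence K r, (1 - R₂ • B) * (1 + V) = 1 - R₁ • B := by
  obtain ⟨N, hN⟩ := hBnil
  set G := ∑ m ∈ Finset.range N, (R₂ • B) ^ m
  have hG : (1 - R₂ • B) * G = 1 := by rw [mul_neg_geom_sum, smul_pow, hN, smul_zero, sub_zero]
  refine ⟨(R₂ - R₁) • (G * B), smul_mem_nonnegIncidence (sub_nonneg.2 hR) (Subsemiring.mul_mem _
    (Subsemiring.sum_mem _ fun m _ => Subsemiring.pow_mem _ (smul_mem_nonnegIncidence hR₂ hB) m)
    hB), ?_⟩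
  rw [mul_add, mul_one, mul_smul_comm, ← mul_assoc, hG, one_mul, sub_smul]
  abel

lemma exists_forall_exists_nonneg_mulVec_eq {U : Matrix ι ι K} (hU : U ∈ nonnegIncidence K r)
    {ε₁ : K} (hε₁ : 0 < ε₁) (hUε : U - ε₁ • incidence K r ∈ nonnegIncidence K r) :
    ∃ ε₂, 0 < ε₂ ∧ ε₂ < ε₁ ∧
      ∀ z, 0 ≤ z → ∃ w, 0 ≤ w ∧ (1 + ε₂ • incidence K r) *ᵥ w = U *ᵥ z := by
  set A : Matrix ι ι K := incidence K r
  have hA : A ∈ nonnegIncidence K r := incidence_mem_nonnegIncidence fun _ _ h => h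
  obtain ⟨c₁, hc₁, hAA⟩ := exists_le_mul_incidence (Subsemiring.mul_mem _ hA hA)
  obtain ⟨c₂, hc₂, hAU⟩ := exists_le_mul_incidence (Subsemiring.mul_mem _ hA hU)
  set c := c₁ + c₂
  set ε₂ := min ε₁ 1 / (2 * (c + 1))
  have hε₂ : 0 < ε₂ := by positivity
  have hε₂c : 2 * ε₂ * c ≤ min ε₁ 1 := by
    calc 2 * ε₂ * c ≤ ε₂ * (2 * (c + 1)) := by nlinarith
      _ = min ε₁ 1 := div_mul_cancel₀ _ (by positivity)
  have hε₂c₁ : 2 * ε₂ * c₁ ≤ 1 := by nlinarith [min_le_right ε₁ 1]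
  have hε₂c₂ : 2 * ε₂ * c₂ ≤ ε₁ := by nlinarith [min_le_left ε₁ 1]
  refine ⟨ε₂, hε₂, ?_, fun z hz => exists_nonneg_add_mulVec_eq (fun i j => ?_) (fun i j => ?_)
    (fun i j => (hU i j).1) (fun i j => ?_) hz⟩
  · calc ε₂ ≤ min ε₁ 1 / 2 := div_le_div_of_nonneg_left (by positivity) two_pos (by linarith)
      _ < ε₁ := by linarith [min_le_left ε₁ 1]
  · exact mul_nonneg hε₂.le (hA i j).1
  · have h : (A * A) i j ≤ c₁ * A i j := hAA i j
    have hAij := (hA i j).1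
    simp only [smul_mul, Matrix.mul_smul, smul_apply, smul_eq_mul]
    nlinarith [mul_le_mul_of_nonneg_left h (by positivity : (0 : K) ≤ 2 * ε₂ * ε₂),
      mul_le_mul_of_nonneg_right hε₂c₁ (mul_nonneg hε₂.le hAij)]
  · have h : (A * U) i j ≤ c₂ * A i j := hAU i j
    have hAij := (hA i j).1
    have hUij := (hUε i j).1
    simp only [smul_mul, smul_apply, sub_apply, smul_eq_mul] at h hUij ⊢
    nlinarith

end NonnegIncidence

end Matrix

open Matrix

section Combinatorics

variable {n : ℕ}

def NotMemZset (𝒮 : Set (Set (Fin n))) (j i : Fin n) : Prop := j ∉ Zset n 𝒮 i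

lemma notMemZset_iff {𝒮 : Set (Set (Fin n))} {j i : Fin n} :
    NotMemZset 𝒮 j i ↔ ∀ S ∈ 𝒮, j ∈ S → i ∈ S := by
  simp only [NotMemZset, Zset, Set.mem_sUnion, not_exists, not_and]
  exact ⟨fun h S hS hj => by_contra fun hi => h S ⟨hS, hi⟩ hj,
    fun h S ⟨hS, hi⟩ hj => hi (h S hS hj)⟩

instance (𝒮 : Set (Set (Fin n))) : IsPreorder (Fin n) (NotMemZset 𝒮) where
  refl _ := notMemZset_iff.2 fun _ _ h => h
  trans _ _ _ h₁ h₂ := notMemZset_iff.2 fun S hS h => notMemZset_iff.1 h₂ S hS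
    (notMemZset_iff.1 h₁ S hS h)

lemma alphaMap_eq (F : Subfield ℝ) (𝒮 : Set (Set (Fin n))) (ε : F) (z : Fin n → F) :
    alphaMap F n 𝒮 ε z = (1 + ε • incidence F (NotMemZset 𝒮)) *ᵥ z := by
  funext i
  rw [add_mulVec, one_mulVec, smul_mulVec]
  simp only [Pi.add_apply, Pi.smul_apply, smul_eq_mul, mulVec, dotProduct, incidence, of_apply,
    boole_mul]
  simp only [alphaMap, Finset.sum_filter, NotMemZset]
  exact congrArg _ (congrArg _ (Finset.sum_congr rfl fun j _ => by
    by_cases h : j ∈ Zset n 𝒮 i <;> simp [h]))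

def BetaRel (𝒮 : Set (Set (Fin n))) (Egt : Set (Fin n) → Set (Fin n)) (j i : Fin n) : Prop :=
  j ∉ Pset n 𝒮 Egt i ∧ Pset n 𝒮 Egt j ≠ Pset n 𝒮 Egt i

lemma betaMap_eq (F : Subfield ℝ) (𝒮 : Set (Set (Fin n))) (Egt : Set (Fin n) → Set (Fin n))
    (R : F) (y : Fin n → F) :
    betaMap F n 𝒮 Egt R y = (1 - R • incidence F (BetaRel 𝒮 Egt)) *ᵥ y := by
  funext i
  rw [sub_mulVec, one_mulVec, smul_mulVec]
  simp only [Pi.sub_apply, Pi.smul_apply, smul_eq_mul, mulVec, dotProduct, incidence, of_apply,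
    boole_mul]
  simp only [betaMap, Finset.sum_filter, BetaRel]
  exact congrArg _ (congrArg _ (Finset.sum_congr rfl fun j _ => by
    by_cases h : j ∈ Pset n 𝒮 Egt i <;> by_cases h' : Pset n 𝒮 Egt j = Pset n 𝒮 Egt i <;>
      simp [h, h']))

lemma Pset_mem {𝒮 : Set (Set (Fin n))} {Egt : Set (Fin n) → Set (Fin n)} (hempty : ∅ ∈ 𝒮)
    (hcup : ∀ S₁ ∈ 𝒮, ∀ S₂ ∈ 𝒮, S₁ ∪ S₂ ∈ 𝒮)
    (hRV1 : ∀ S₁ ∈ 𝒮, ∀ S₂ ∈ 𝒮,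
      (S₁ ∪ S₂)ᶜ ∪ Egt (S₁ ∪ S₂) = (S₁ᶜ ∪ Egt S₁) ∩ (S₂ᶜ ∪ Egt S₂))
    (i : Fin n) : Pset n 𝒮 Egt i ∈ 𝒮 := by
  have hsup : SupClosed {S ∈ 𝒮 | i ∈ Sᶜ ∪ Egt S} := fun S₁ h₁ S₂ h₂ =>
    ⟨hcup S₁ h₁.1 S₂ h₂.1, show i ∈ (S₁ ∪ S₂)ᶜ ∪ Egt (S₁ ∪ S₂) by
      rw [hRV1 S₁ h₁.1 S₂ h₂.1]; exact ⟨h₁.2, h₂.2⟩⟩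
  exact (hsup.sSup_mem (Set.toFinite _) ⟨hempty, Or.inl (Set.notMem_empty i)⟩ subset_rfl).1

lemma notMemZset_of_notMem_Pset {𝒮 : Set (Set (Fin n))} {Egt : Set (Fin n) → Set (Fin n)}
    {i j : Fin n} (hj : j ∉ Pset n 𝒮 Egt i) : NotMemZset 𝒮 j i :=
  notMemZset_iff.2 fun S hS hjS => by_contra fun hiS =>
    hj (Set.subset_sUnion_of_mem (show S ∈ {S ∈ 𝒮 | i ∈ Sᶜ ∪ Egt S} from ⟨hS, Or.inl hiS⟩)
      hjS)

lemma isNilpotent_incidence_betaRel (F : Subfield ℝ) {𝒮 : Set (Set (Fin n))}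
    {Egt : Set (Fin n) → Set (Fin n)} (hP : ∀ i, Pset n 𝒮 Egt i ∈ 𝒮) :
    IsNilpotent (incidence F (BetaRel 𝒮 Egt)) := by
  refine isNilpotent_of_apply_ne_zero (fun i => (Pset n 𝒮 Egt i).ncard) fun i j hij => ?_
  have ⟨hj, hne⟩ : BetaRel 𝒮 Egt j i := by_contra fun h => hij (by simp [incidence, h])
  have hsub : Pset n 𝒮 Egt i ⊆ Pset n 𝒮 Egt j :=
    Set.subset_sUnion_of_mem
      (show Pset n 𝒮 Egt i ∈ {S ∈ 𝒮 | j ∈ Sᶜ ∪ Egt S} from ⟨hP i, Or.inl hj⟩)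
  exact Set.ncard_lt_ncard (hsub.ssubset_of_ne hne.symm) (Set.toFinite _)

end Combinatorics

theorem stmt14_general (F : Subfield ℝ) (n : ℕ) (𝒮 : Set (Set (Fin n)))
    (hempty : ∅ ∈ 𝒮)
    (hcup : ∀ S₁ ∈ 𝒮, ∀ S₂ ∈ 𝒮, S₁ ∪ S₂ ∈ 𝒮)
    (Egt : Set (Fin n) → Set (Fin n))
    (hRV1 : ∀ S₁ ∈ 𝒮, ∀ S₂ ∈ 𝒮,
      (S₁ ∪ S₂)ᶜ ∪ Egt (S₁ ∪ S₂) = (S₁ᶜ ∪ Egt S₁) ∩ (S₂ᶜ ∪ Egt S₂))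
    (R₁ ε₁ R' : F) (hR₁ : 0 < R₁) (hε₁ : 0 < ε₁) (hR' : R₁ < R') :
    ∃ R₂ ε₂ : F, R' < R₂ ∧ 0 < ε₂ ∧ ε₂ < ε₁ ∧
      betaMap F n 𝒮 Egt R₁ '' (alphaMap F n 𝒮 ε₁ '' {z : Fin n → F | ∀ i, 0 ≤ z i}) ⊆
        betaMap F n 𝒮 Egt R₂ '' (alphaMap F n 𝒮 ε₂ '' {z : Fin n → F | ∀ i, 0 ≤ z i}) := by
  set P := nonnegIncidence F (NotMemZset 𝒮)
  set A := incidence F (NotMemZset 𝒮)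
  have hA : A ∈ P := incidence_mem_nonnegIncidence fun _ _ h => h
  have hB : incidence F (BetaRel 𝒮 Egt) ∈ P :=
    incidence_mem_nonnegIncidence fun _ _ h => notMemZset_of_notMem_Pset h.1
  obtain ⟨V, hV, hBV⟩ := exists_one_sub_smul_mul_one_add_eq hB
    (isNilpotent_incidence_betaRel F (Pset_mem hempty hcup hRV1)) (by linarith : (0 : F) ≤ R' + 1)
    (by linarith : R₁ ≤ R' + 1)
  have hα₁ : 1 + ε₁ • A ∈ P := add_mem (one_mem P) (smul_mem_nonnegIncidence hε₁.le hA)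
  have hU : (1 + V) * (1 + ε₁ • A) - ε₁ • A ∈ P := by
    rw [add_mul, one_mul, add_sub_right_comm, add_sub_cancel_right]
    exact add_mem (one_mem P) (mul_mem hV hα₁)
  obtain ⟨ε₂, hε₂, hε₂ε₁, hsolve⟩ :=
    exists_forall_exists_nonneg_mulVec_eq (mul_mem (add_mem (one_mem P) hV) hα₁) hε₁ hU
  refine ⟨R' + 1, ε₂, lt_add_one R', hε₂, hε₂ε₁, ?_⟩
  rintro _ ⟨_, ⟨z, hz, rfl⟩, rfl⟩
  obtain ⟨w, hw, hwz⟩ := hsolve z hz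
  refine ⟨_, ⟨w, hw, rfl⟩, ?_⟩
  rw [alphaMap_eq, alphaMap_eq, betaMap_eq, betaMap_eq, hwz, mulVec_mulVec, mulVec_mulVec,
    ← mul_assoc, hBV]

/-- For any `R₁, ε₁ > 0` and any `R' > R₁`, there exist `R₂ > R'` and `0 < ε₂ < ε₁`
such that `β^{R₁}(α^{ε₁}(F_{≥0}ⁿ)) ⊆ β^{R₂}(α^{ε₂}(F_{≥0}ⁿ))`. -/
theorem stmt14 (F : Subfield ℝ) (n : ℕ) (𝒮 : Set (Set (Fin n)))
    (hempty : ∅ ∈ 𝒮) (huniv : Set.univ ∈ 𝒮)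
    (hcup : ∀ S₁ ∈ 𝒮, ∀ S₂ ∈ 𝒮, S₁ ∪ S₂ ∈ 𝒮)
    (hcap : ∀ S₁ ∈ 𝒮, ∀ S₂ ∈ 𝒮, S₁ ∩ S₂ ∈ 𝒮)
    (Egt Estar : Set (Fin n) → Set (Fin n))
    (hpart : ∀ S ∈ 𝒮, Egt S ∩ Estar S = ∅ ∧ Egt S ∪ Estar S = S)
    (hRV1 : ∀ S₁ ∈ 𝒮, ∀ S₂ ∈ 𝒮,
      (S₁ ∪ S₂)ᶜ ∪ Egt (S₁ ∪ S₂) = (S₁ᶜ ∪ Egt S₁) ∩ (S₂ᶜ ∪ Egt S₂))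
    (hRV2 : ∀ S₁ ∈ 𝒮, ∀ S₂ ∈ 𝒮, ¬ S₂ ⊆ S₁ → (Egt S₂ \ S₁).Nonempty)
    (R₁ ε₁ R' : F) (hR₁ : 0 < R₁) (hε₁ : 0 < ε₁) (hR' : R₁ < R') :
    ∃ R₂ ε₂ : F, R' < R₂ ∧ 0 < ε₂ ∧ ε₂ < ε₁ ∧
      betaMap F n 𝒮 Egt R₁ '' (alphaMap F n 𝒮 ε₁ '' {z : Fin n → F | ∀ i, 0 ≤ z i}) ⊆
        betaMap F n 𝒮 Egt R₂ '' (alphaMap F n 𝒮 ε₂ '' {z : Fin n → F | ∀ i, 0 ≤ z i}) :=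
  stmt14_general F n 𝒮 hempty hcup Egt hRV1 R₁ ε₁ R' hR₁ hε₁ hR'
end
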